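/- Let X be a set and let P be a nonempty sublattice of 2^{P(X)}. Then the topological closure of P in 2^{P(X)} is a complete sublattice of 2^{P(X)}, and it equals the intersection of all complete sublattices of 2^{P(X)} containing P; in other words, the topological closure of P coincides with the lattice-theoretic completion of P inside 2^{P(X)}. -/

import Mathlib

/-- The Cantor-cube topology on `Set (Set X)` (identifying `𝒫(𝒫(X))` with `2^{𝒫(X)}`):
the product topology, whose subbasic open sets are
`A⁺ = {x | A ∈ x}` and `A⁻ = {x | A ∉ x}` for `A ⊆ X`. -/
def cantorTop (X : Type*) : TopologicalSpace (Set (Set X)) :=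
  TopologicalSpace.generateFrom
    ({U | ∃ A : Set X, U = {x : Set (Set X) | A ∈ x}} ∪
     {U | ∃ A : Set X, U = {x : Set (Set X) | A ∉ x}})

open scoped Topology

/-- A complete sublattice of `2^{𝒫(X)}`: a nonempty family closed under pairwise unions
and intersections and, for every nonempty subfamily, under its union and intersection. -/
def IsCompleteSublattice {X : Type*} (P : Set (Set (Set X))) : Prop :=
  P.Nonempty ∧ (∀ a ∈ P, ∀ b ∈ P, a ∪ b ∈ P ∧ a ∩ b ∈ P) ∧
    ∀ S ⊆ P, S.Nonempty → ⋃₀ S ∈ P ∧ ⋂₀ S ∈ P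

/-!
Each coordinate `x ↦ (A ∈ x)` is continuous, so `∪` and `∩` are continuous and the closure of a
sublattice is a sublattice. An arbitrary nonempty union (intersection) is the limit of the net of
its finite partial unions (intersections), so a closed sublattice is complete. Conversely, if `x`
lies in the closure of `L` then `x = ⋃_{A ∈ x} ⋂ {p ∈ L | A ∈ p}` and
`x = ⋂_{B ∉ x} ⋃ {p ∈ L | B ∉ p}`; one of the two index sets is nonempty, so a complete
sublattice is closed.
-/

open Set Filter

section CantorCube

variable {X : Type*}

attribute [local instance] cantorTop

namespace cantorTop

lemma isOpen_setOf_mem (A : Set X) : IsOpen {x : Set (Set X) | A ∈ x} :=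
  TopologicalSpace.isOpen_generateFrom_of_mem (Or.inl ⟨A, rfl⟩)

lemma isOpen_setOf_notMem (A : Set X) : IsOpen {x : Set (Set X) | A ∉ x} :=
  TopologicalSpace.isOpen_generateFrom_of_mem (Or.inr ⟨A, rfl⟩)

lemma tendsto_nhds_iff {ι : Type*} {l : Filter ι} {f : ι → Set (Set X)} {x : Set (Set X)} :
    Tendsto f l (𝓝 x) ↔ ∀ A, ∀ᶠ i in l, A ∈ f i ↔ A ∈ x := by
  refine TopologicalSpace.tendsto_nhds_generateFrom_iff.trans ⟨fun h A => ?_, ?_⟩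
  · by_cases hA : A ∈ x
    · exact mem_of_superset (h _ (Or.inl ⟨A, rfl⟩) hA) fun i hi => iff_of_true hi hA
    · exact mem_of_superset (h _ (Or.inr ⟨A, rfl⟩) hA) fun i hi => iff_of_false hi hA
  · rintro h _ (⟨A, rfl⟩ | ⟨A, rfl⟩) hA
    · exact (h A).mono fun i hi => hi.2 hA
    · exact (h A).mono fun i hi => mt hi.1 hA

lemma continuous_union : Continuous fun p : Set (Set X) × Set (Set X) => p.1 ∪ p.2 := by
  refine continuous_generateFrom_iff.2 ?_
  rintro _ (⟨A, rfl⟩ | ⟨A, rfl⟩)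
  · exact ((isOpen_setOf_mem A).preimage continuous_fst).union
      ((isOpen_setOf_mem A).preimage continuous_snd)
  · simp only [preimage_ofPred_eq, mem_union, not_or, ofPred_and]
    exact ((isOpen_setOf_notMem A).preimage continuous_fst).inter
      ((isOpen_setOf_notMem A).preimage continuous_snd)

lemma continuous_inter : Continuous fun p : Set (Set X) × Set (Set X) => p.1 ∩ p.2 := by
  refine continuous_generateFrom_iff.2 ?_
  rintro _ (⟨A, rfl⟩ | ⟨A, rfl⟩)
  · exact ((isOpen_setOf_mem A).preimage continuous_fst).inter
      ((isOpen_setOf_mem A).preimage continuous_snd)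
  · simp only [preimage_ofPred_eq, mem_inter_iff, not_and_or, ofPred_or]
    exact ((isOpen_setOf_notMem A).preimage continuous_fst).union
      ((isOpen_setOf_notMem A).preimage continuous_snd)

lemma supClosed_closure {P : Set (Set (Set X))} (hP : SupClosed P) : SupClosed (closure P) :=
  fun _ ha _ hb => map_mem_closure₂ continuous_union ha hb fun _ ha _ hb => hP ha hb

lemma infClosed_closure {P : Set (Set (Set X))} (hP : InfClosed P) : InfClosed (closure P) :=
  fun _ ha _ hb => map_mem_closure₂ continuous_inter ha hb fun _ ha _ hb => hP ha hb

variable {C S : Set (Set (Set X))}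

lemma sUnion_mem_of_isClosed (hC : IsClosed C) (hsup : SupClosed C) (hS : S ⊆ C)
    (hne : S.Nonempty) : ⋃₀ S ∈ C := by
  obtain ⟨s₀, hs₀⟩ := hne
  have hsub : ∀ T : Finset (Set (Set X)), insert s₀ (↑T ∩ S) ⊆ S := fun T =>
    insert_subset hs₀ inter_subset_right
  refine hC.mem_of_tendsto (f := fun T : Finset (Set (Set X)) => ⋃₀ insert s₀ (↑T ∩ S)) (b := atTop)
    (tendsto_nhds_iff.2 fun A => ?_) (Eventually.of_forall fun T =>
      hsup.sSup_mem_of_nonempty ((T.finite_toSet.inter_of_left S).insert s₀)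
        (insert_nonempty _ _) ((hsub T).trans hS))
  by_cases hA : A ∈ ⋃₀ S
  · obtain ⟨s, hs, hAs⟩ := hA
    filter_upwards [eventually_ge_atTop {s}] with T hT
    refine iff_of_true ⟨s, mem_insert_of_mem _ ⟨?_, hs⟩, hAs⟩ ⟨s, hs, hAs⟩
    simpa using hT
  · exact Eventually.of_forall fun T => iff_of_false (fun h => hA (sUnion_mono (hsub T) h)) hA

lemma sInter_mem_of_isClosed (hC : IsClosed C) (hinf : InfClosed C) (hS : S ⊆ C)
    (hne : S.Nonempty) : ⋂₀ S ∈ C := by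
  obtain ⟨s₀, hs₀⟩ := hne
  have hsub : ∀ T : Finset (Set (Set X)), insert s₀ (↑T ∩ S) ⊆ S := fun T =>
    insert_subset hs₀ inter_subset_right
  refine hC.mem_of_tendsto (f := fun T : Finset (Set (Set X)) => ⋂₀ insert s₀ (↑T ∩ S)) (b := atTop)
    (tendsto_nhds_iff.2 fun A => ?_) (Eventually.of_forall fun T =>
      hinf.sInf_mem_of_nonempty ((T.finite_toSet.inter_of_left S).insert s₀)
        (insert_nonempty _ _) ((hsub T).trans hS))
  by_cases hA : A ∈ ⋂₀ S
  · exact Eventually.of_forall fun T => iff_of_true (sInter_subset_sInter (hsub T) hA) hA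
  · obtain ⟨s, hs, hAs⟩ : ∃ s ∈ S, A ∉ s := by simpa [mem_sInter] using hA
    filter_upwards [eventually_ge_atTop {s}] with T hT
    refine iff_of_false (fun h => hAs (h s (mem_insert_of_mem _ ⟨?_, hs⟩))) hA
    simpa using hT

lemma isCompleteSublattice_of_isClosed (hC : IsClosed C) (hne : C.Nonempty)
    (hsup : SupClosed C) (hinf : InfClosed C) : IsCompleteSublattice C :=
  ⟨hne, fun _ ha _ hb => ⟨hsup ha hb, hinf ha hb⟩, fun _ hS hSne =>
    ⟨sUnion_mem_of_isClosed hC hsup hS hSne, sInter_mem_of_isClosed hC hinf hS hSne⟩⟩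

variable {L : Set (Set (Set X))} {x : Set (Set X)}

lemma exists_mem_of_mem_closure (hx : x ∈ closure L) {A B : Set X} (hA : A ∈ x) (hB : B ∉ x) :
    ∃ p ∈ L, A ∈ p ∧ B ∉ p :=
  (mem_closure_iff.1 hx _ ((isOpen_setOf_mem A).inter (isOpen_setOf_notMem B)) ⟨hA, hB⟩).imp
    fun _ ⟨hp, hpL⟩ => ⟨hpL, hp⟩

lemma sUnion_image_sInter_eq_of_mem_closure (hx : x ∈ closure L) :
    ⋃₀ ((fun A => ⋂₀ {p ∈ L | A ∈ p}) '' x) = x := by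
  refine subset_antisymm ?_ fun A hA => ⟨_, mem_image_of_mem _ hA, fun p hp => hp.2⟩
  rintro B ⟨_, ⟨A, hA, rfl⟩, hB⟩
  by_contra hBx
  obtain ⟨p, hpL, hAp, hBp⟩ := exists_mem_of_mem_closure hx hA hBx
  exact hBp (hB p ⟨hpL, hAp⟩)

lemma sInter_image_sUnion_eq_of_mem_closure (hx : x ∈ closure L) :
    ⋂₀ ((fun B => ⋃₀ {p ∈ L | B ∉ p}) '' xᶜ) = x := by
  refine subset_antisymm (fun A hA => ?_) ?_
  · by_contra hAx
    obtain ⟨p, ⟨-, hAp⟩, hAp'⟩ := hA _ (mem_image_of_mem _ hAx)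
    exact hAp hAp'
  · rintro A hA _ ⟨B, hB, rfl⟩
    obtain ⟨p, hpL, hAp, hBp⟩ := exists_mem_of_mem_closure hx hA hB
    exact ⟨p, ⟨hpL, hBp⟩, hAp⟩

end cantorTop

open cantorTop in
lemma IsCompleteSublattice.isClosed {L : Set (Set (Set X))} (hL : IsCompleteSublattice L) :
    IsClosed L := by
  obtain ⟨-, -, hcomplete⟩ := hL
  refine closure_subset_iff_isClosed.1 fun x hx => ?_
  rcases x.eq_empty_or_nonempty with rfl | hx_ne
  · rw [← sInter_image_sUnion_eq_of_mem_closure hx]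
    refine (hcomplete _ ?_ ((nonempty_compl.2 empty_ne_univ).image _)).2
    rintro _ ⟨B, hB, rfl⟩
    refine (hcomplete _ (sep_subset _ _) ?_).1
    exact (mem_closure_iff.1 hx _ (isOpen_setOf_notMem B) hB).imp fun _ ⟨hBp, hpL⟩ => ⟨hpL, hBp⟩
  · rw [← sUnion_image_sInter_eq_of_mem_closure hx]
    refine (hcomplete _ ?_ (hx_ne.image _)).1
    rintro _ ⟨A, hA, rfl⟩
    refine (hcomplete _ (sep_subset _ _) ?_).2
    exact (mem_closure_iff.1 hx _ (isOpen_setOf_mem A) hA).imp fun _ ⟨hAp, hpL⟩ => ⟨hpL, hAp⟩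

end CantorCube

theorem stmt4 {X : Type*} (P : Set (Set (Set X))) (hP : P.Nonempty)
    (hlat : ∀ a ∈ P, ∀ b ∈ P, a ∪ b ∈ P ∧ a ∩ b ∈ P) :
    IsCompleteSublattice (@closure _ (cantorTop X) P) ∧
    @closure _ (cantorTop X) P = ⋂₀ {L | P ⊆ L ∧ IsCompleteSublattice L} := by
  let := cantorTop X
  have hC : IsCompleteSublattice (closure P) :=
    cantorTop.isCompleteSublattice_of_isClosed isClosed_closure (hP.mono subset_closure)
      (cantorTop.supClosed_closure fun _ ha _ hb => (hlat _ ha _ hb).1)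
      (cantorTop.infClosed_closure fun _ ha _ hb => (hlat _ ha _ hb).2)
  exact ⟨hC, subset_antisymm (subset_sInter fun L ⟨hPL, hL⟩ => closure_minimal hPL hL.isClosed)
    (sInter_subset_of_mem ⟨subset_closure, hC⟩)⟩
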